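/- For a strictly monotone linear dilation d, the canonical homogeneous norm and the weighted Euclidean norm are related by: ‖x‖_d^{η̲} ≤ ‖x‖ ≤ ‖x‖_d^{η̄} when ‖x‖ ≥ 1, and ‖x‖_d^{η̄} ≤ ‖x‖ ≤ ‖x‖_d^{η̲} when ‖x‖ ≤ 1. -/

import Mathlib

open Matrix NormedSpace

noncomputable def dil {n : ℕ} (G : Matrix (Fin n) (Fin n) ℝ) (s : ℝ) :
    Matrix (Fin n) (Fin n) ℝ :=
  NormedSpace.exp (s • G)

section

open scoped ComplexOrder

/-- The positive semidefinite square root, as `Matrix.PosSemidef.sqrt` was defined in Mathlib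
of December 2024 (since removed). -/
noncomputable def Matrix.PosSemidef.sqrt {m : Type*} [Fintype m] [DecidableEq m] {𝕜 : Type*}
    [RCLike 𝕜] {A : Matrix m m 𝕜} (hA : A.PosSemidef) : Matrix m m 𝕜 :=
  hA.isHermitian.eigenvectorUnitary.1 * diagonal ((↑) ∘ Real.sqrt ∘ hA.isHermitian.eigenvalues) *
    (star hA.isHermitian.eigenvectorUnitary : Matrix m m 𝕜)

end

noncomputable def wnorm {n : ℕ} (P : Matrix (Fin n) (Fin n) ℝ) (x : Fin n → ℝ) : ℝ :=
  Real.sqrt (x ⬝ᵥ P.mulVec x)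

/-!
Let `Q = P^{1/2}` and `S = Q G Q⁻¹ + Q⁻¹ Gᵀ Q`, so that `Q S Q = P G + Gᵀ P`. Conjugating by `Q`
turns the spectral bounds `2η̲ ≤ S ≤ 2η̄` into the Lyapunov inequalities
`2η̲ P ≤ P G + Gᵀ P ≤ 2η̄ P`, and `η̲ > 0` because `S` is congruent to `P G + Gᵀ P ≻ 0`.
Along an orbit `t ↦ d(t) y`, the derivative of `ln ‖d(t) y‖` is the Rayleigh quotient
`zᵀ(P G + Gᵀ P)z / (2 zᵀ P z)` at `z = d(t) y`, hence lies in `[η̲, η̄]`. For `x ≠ 0` take the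
unit vector `y = d(-ln ‖x‖_d) x` and `t = ln ‖x‖_d`: the mean value theorem gives
`η̲ t ≤ ln ‖x‖ ≤ η̄ t` for `t ≥ 0` and the reverse inequalities for `t ≤ 0`, so `ln ‖x‖` and `t`
have the same sign, and exponentiating gives the claim.
-/

open scoped MatrixOrder ComplexOrder

namespace Matrix

namespace PosSemidef

variable {m : Type*} [Fintype m] [DecidableEq m] {𝕜 : Type*} [RCLike 𝕜] {A : Matrix m m 𝕜}

lemma sqrt_eq_cfcSqrt (hA : A.PosSemidef) : hA.sqrt = CFC.sqrt A := by
  rw [CFC.sqrt_eq_real_sqrt A hA.nonneg, cfcₙ_eq_cfc, hA.isHermitian.cfc_eq]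
  rfl

lemma sqrt_mul_self (hA : A.PosSemidef) : hA.sqrt * hA.sqrt = A := by
  rw [sqrt_eq_cfcSqrt, CFC.sqrt_mul_sqrt_self A hA.nonneg]

lemma isHermitian_sqrt (hA : A.PosSemidef) : hA.sqrt.IsHermitian := by
  rw [sqrt_eq_cfcSqrt]
  exact (CFC.sqrt_nonneg A).isSelfAdjoint

lemma isUnit_sqrt (hA : A.PosSemidef) (hAu : IsUnit A) : IsUnit hA.sqrt := by
  rwa [sqrt_eq_cfcSqrt, CFC.isUnit_sqrt_iff A hA.nonneg]

end PosSemidef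

lemma dotProduct_mulVec_le_of_le {m : Type*} [Fintype m] {A B : Matrix m m ℝ} (h : A ≤ B)
    (v : m → ℝ) : v ⬝ᵥ A *ᵥ v ≤ v ⬝ᵥ B *ᵥ v := by
  have := (le_iff.mp h).dotProduct_mulVec_nonneg v
  rwa [star_trivial, sub_mulVec, dotProduct_sub, sub_nonneg] at this

section Conjugation

variable {m : Type*} [Fintype m] [DecidableEq m] {Q G : Matrix m m ℝ}

lemma isSelfAdjoint_conj_add_conj_transpose (hQ : Q.IsHermitian) :
    IsSelfAdjoint (Q * G * Q⁻¹ + Q⁻¹ * Gᵀ * Q) := by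
  have hstar : star (Q * G * Q⁻¹) = Q⁻¹ * Gᵀ * Q := by
    rw [star_eq_conjTranspose, conjTranspose_mul, conjTranspose_mul, conjTranspose_nonsing_inv,
      hQ.eq, conjTranspose_eq_transpose_of_trivial, mul_assoc]
  exact hstar ▸ IsSelfAdjoint.add_star_self (Q * G * Q⁻¹)

lemma star_mul_conj_add_conj_transpose_mul (hQ : Q.IsHermitian) (hQu : IsUnit Q) :
    star Q * (Q * G * Q⁻¹ + Q⁻¹ * Gᵀ * Q) * Q = Q * Q * G + Gᵀ * (Q * Q) := by
  have hdet : IsUnit Q.det := (isUnit_iff_isUnit_det Q).mp hQu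
  rw [star_eq_conjTranspose, hQ.eq]
  simp only [Matrix.mul_add, Matrix.add_mul, ← mul_assoc, nonsing_inv_mul_cancel_right _ _ hdet,
    mul_nonsing_inv _ hdet, one_mul]

lemma pos_of_mem_spectrum_conj_add_conj_transpose (hQ : Q.IsHermitian) (hQu : IsUnit Q)
    (hpos : (Q * Q * G + Gᵀ * (Q * Q)).PosDef) {μ : ℝ}
    (hμ : μ ∈ spectrum ℝ (Q * G * Q⁻¹ + Q⁻¹ * Gᵀ * Q)) : 0 < μ := by
  rw [← star_mul_conj_add_conj_transpose_mul hQ hQu,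
    IsUnit.posDef_star_left_conjugate_iff hQu] at hpos
  exact hpos.isStrictlyPositive.spectrum_pos hμ

lemma smul_le_and_le_smul_of_spectrum (hQ : Q.IsHermitian) (hQu : IsUnit Q) {a b : ℝ}
    (ha : a ∈ lowerBounds (spectrum ℝ (Q * G * Q⁻¹ + Q⁻¹ * Gᵀ * Q)))
    (hb : b ∈ upperBounds (spectrum ℝ (Q * G * Q⁻¹ + Q⁻¹ * Gᵀ * Q))) :
    a • (Q * Q) ≤ Q * Q * G + Gᵀ * (Q * Q) ∧ Q * Q * G + Gᵀ * (Q * Q) ≤ b • (Q * Q) := by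
  have hS := isSelfAdjoint_conj_add_conj_transpose (G := G) hQ
  have hlo := star_left_conjugate_le_conjugate (algebraMap_le_of_le_spectrum ha hS) Q
  have hhi := star_left_conjugate_le_conjugate (le_algebraMap_of_spectrum_le hb hS) Q
  rw [star_mul_conj_add_conj_transpose_mul hQ hQu] at hlo hhi
  simp only [Algebra.algebraMap_eq_smul_one, mul_smul_comm, mul_one, smul_mul_assoc,
    star_eq_conjTranspose, hQ.eq] at hlo hhi
  exact ⟨hlo, hhi⟩

end Conjugation

end Matrix

section Calculus

lemma HasDerivAt.dotProduct {ι : Type*} [Fintype ι] {u v : ℝ → ι → ℝ} {u' v' : ι → ℝ} {t : ℝ}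
    (hu : HasDerivAt u u' t) (hv : HasDerivAt v v' t) :
    HasDerivAt (fun s => u s ⬝ᵥ v s) (u' ⬝ᵥ v t + u t ⬝ᵥ v') t := by
  have hsum := HasDerivAt.fun_sum (u := Finset.univ) fun i _ =>
    (hasDerivAt_pi.mp hu i).fun_mul (hasDerivAt_pi.mp hv i)
  rw [Finset.sum_add_distrib] at hsum
  exact hsum

lemma HasDerivAt.mulVec {ι : Type*} [Fintype ι] (A : Matrix ι ι ℝ) {v : ℝ → ι → ℝ} {v' : ι → ℝ}
    {t : ℝ} (hv : HasDerivAt v v' t) : HasDerivAt (fun s => A *ᵥ v s) (A *ᵥ v') t :=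
  (LinearMap.toContinuousLinearMap A.mulVecLin).hasFDerivAt.comp_hasDerivAt t hv

lemma mem_Icc_mul_of_deriv_mem_Icc {φ : ℝ → ℝ} {a b : ℝ} (hφ : Differentiable ℝ φ)
    (hφ' : ∀ t, deriv φ t ∈ Set.Icc a b) (h0 : φ 0 = 0) (s : ℝ) :
    (0 ≤ s → φ s ∈ Set.Icc (a * s) (b * s)) ∧ (s ≤ 0 → φ s ∈ Set.Icc (b * s) (a * s)) := by
  have hlo := mul_sub_le_image_sub_of_le_deriv hφ fun t => (hφ' t).1
  have hhi := image_sub_le_mul_sub_of_deriv_le hφ fun t => (hφ' t).2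
  refine ⟨fun hs => ?_, fun hs => ?_⟩ <;>
  · have h₁ := hlo hs
    have h₂ := hhi hs
    constructor <;> linarith

lemma rpow_bounds_of_log_mem_Icc {h w a b : ℝ} (hh : 0 < h) (hw : 0 < w) (ha : 0 < a)
    (hlog : (0 ≤ Real.log h → Real.log w ∈ Set.Icc (a * Real.log h) (b * Real.log h)) ∧
      (Real.log h ≤ 0 → Real.log w ∈ Set.Icc (b * Real.log h) (a * Real.log h))) :
    (1 ≤ w → h ^ a ≤ w ∧ w ≤ h ^ b) ∧ (w ≤ 1 → h ^ b ≤ w ∧ w ≤ h ^ a) := by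
  simp only [← Real.log_nonneg_iff hw, ← Real.log_nonpos_iff hw.le, Real.rpow_le_iff_le_log hh hw,
    Real.le_rpow_iff_log_le hw hh]
  obtain ⟨hpos, hneg⟩ := hlog
  refine ⟨fun hw₁ => ?_, fun hw₁ => ?_⟩
  · rcases le_or_gt 0 (Real.log h) with hs | hs
    · exact hpos hs
    · nlinarith [(hneg hs.le).2]
  · rcases le_or_gt (Real.log h) 0 with hs | hs
    · exact hneg hs
    · nlinarith [(hpos hs.le).1]

end Calculus

section Dilation

variable {n : ℕ} (G : Matrix (Fin n) (Fin n) ℝ)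

lemma dil_zero : dil G 0 = 1 := by
  rw [dil, zero_smul, NormedSpace.exp_zero]

lemma dil_neg_mulVec_dil_mulVec (s : ℝ) (x : Fin n → ℝ) : dil G (-s) *ᵥ (dil G s *ᵥ x) = x := by
  have hcomm : Commute ((-s) • G) (s • G) := ((Commute.refl G).smul_right s).smul_left (-s)
  rw [mulVec_mulVec, dil, dil, ← Matrix.exp_add_of_commute _ _ hcomm, neg_smul, neg_add_cancel,
    NormedSpace.exp_zero, one_mulVec]

lemma dil_mulVec_ne_zero (s : ℝ) {x : Fin n → ℝ} (hx : x ≠ 0) : dil G s *ᵥ x ≠ 0 := fun h =>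
  hx (by rw [← dil_neg_mulVec_dil_mulVec G s x, h, mulVec_zero])

section Derivative

-- `exp` only depends on the topology of the matrix algebra, so any submultiplicative norm will do.
attribute [local instance] Matrix.linftyOpNormedRing Matrix.linftyOpNormedAlgebra

lemma hasDerivAt_dil_mulVec (y : Fin n → ℝ) (t : ℝ) :
    HasDerivAt (fun s => dil G s *ᵥ y) (G *ᵥ (dil G t *ᵥ y)) t := by
  let evalAt : Matrix (Fin n) (Fin n) ℝ →ₗ[ℝ] (Fin n → ℝ) :=
    { toFun := fun M => M *ᵥ y
      map_add' := fun A B => add_mulVec A B y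
      map_smul' := fun c A => smul_mulVec c A y }
  rw [mulVec_mulVec]
  exact (LinearMap.toContinuousLinearMap evalAt).hasFDerivAt.comp_hasDerivAt t
    (hasDerivAt_exp_smul_const' G t)

end Derivative

lemma hasDerivAt_dil_quadForm (P : Matrix (Fin n) (Fin n) ℝ) (y : Fin n → ℝ) (t : ℝ) :
    HasDerivAt (fun s => (dil G s *ᵥ y) ⬝ᵥ P *ᵥ (dil G s *ᵥ y))
      ((dil G t *ᵥ y) ⬝ᵥ (P * G + Gᵀ * P) *ᵥ (dil G t *ᵥ y)) t := by
  have hv := hasDerivAt_dil_mulVec G y t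
  convert hv.dotProduct (hv.mulVec P) using 1
  set v := dil G t *ᵥ y
  rw [add_mulVec, dotProduct_add, add_comm, ← mulVec_mulVec, ← mulVec_mulVec,
    dotProduct_mulVec v Gᵀ, vecMul_transpose]

end Dilation

lemma wnorm_pos {n : ℕ} {P : Matrix (Fin n) (Fin n) ℝ} (hP : P.PosDef) {x : Fin n → ℝ}
    (hx : x ≠ 0) : 0 < wnorm P x :=
  Real.sqrt_pos.mpr (by simpa only [star_trivial] using hP.dotProduct_mulVec_pos hx)

section LogGrowth

variable {n : ℕ} {P : Matrix (Fin n) (Fin n) ℝ} (hP : P.PosDef) (G : Matrix (Fin n) (Fin n) ℝ)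
  {y : Fin n → ℝ} (hy : y ≠ 0)
include hP hy

lemma dotProduct_mulVec_dil_pos (t : ℝ) : 0 < (dil G t *ᵥ y) ⬝ᵥ P *ᵥ (dil G t *ᵥ y) := by
  simpa only [star_trivial] using hP.dotProduct_mulVec_pos (dil_mulVec_ne_zero G t hy)

lemma hasDerivAt_log_wnorm_dil (t : ℝ) :
    HasDerivAt (fun s => Real.log (wnorm P (dil G s *ᵥ y)))
      ((dil G t *ᵥ y) ⬝ᵥ (P * G + Gᵀ * P) *ᵥ (dil G t *ᵥ y) /
        ((dil G t *ᵥ y) ⬝ᵥ P *ᵥ (dil G t *ᵥ y)) / 2) t := by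
  have hE : (fun s => Real.log (wnorm P (dil G s *ᵥ y))) =
      fun s => Real.log ((dil G s *ᵥ y) ⬝ᵥ P *ᵥ (dil G s *ᵥ y)) / 2 := by
    funext s
    exact Real.log_sqrt (dotProduct_mulVec_dil_pos hP G hy s).le
  rw [hE]
  exact ((hasDerivAt_dil_quadForm G P y t).log
    (dotProduct_mulVec_dil_pos hP G hy t).ne').div_const 2

lemma deriv_log_wnorm_dil_mem_Icc {a b : ℝ} (hlo : (2 * a) • P ≤ P * G + Gᵀ * P)
    (hhi : P * G + Gᵀ * P ≤ (2 * b) • P) (t : ℝ) :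
    deriv (fun s => Real.log (wnorm P (dil G s *ᵥ y))) t ∈ Set.Icc a b := by
  have hpos := dotProduct_mulVec_dil_pos hP G hy t
  set v := dil G t *ᵥ y
  have hlo' := dotProduct_mulVec_le_of_le hlo v
  have hhi' := dotProduct_mulVec_le_of_le hhi v
  rw [smul_mulVec, dotProduct_smul, smul_eq_mul] at hlo' hhi'
  rw [(hasDerivAt_log_wnorm_dil hP G hy t).deriv, Set.mem_Icc, le_div_iff₀ two_pos,
    div_le_iff₀ two_pos, le_div_iff₀ hpos, div_le_iff₀ hpos]
  constructor <;> linarith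

end LogGrowth

/-- relation between the canonical homogeneous norm and the weighted norm:
`‖x‖_d^η̲ ≤ ‖x‖ ≤ ‖x‖_d^η̄` when `‖x‖ ≥ 1`, and `‖x‖_d^η̄ ≤ ‖x‖ ≤ ‖x‖_d^η̲` when `‖x‖ ≤ 1`. -/
theorem stmt6 {n : ℕ} (P G : Matrix (Fin n) (Fin n) ℝ) (hP : P.PosDef)
    (hmon : (P * G + Gᵀ * P).PosDef) (η₁ η₂ : ℝ)
    (hmax : IsGreatest (spectrum ℝ
      (hP.posSemidef.sqrt * G * (hP.posSemidef.sqrt)⁻¹ +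
        (hP.posSemidef.sqrt)⁻¹ * Gᵀ * hP.posSemidef.sqrt)) (2 * η₂))
    (hmin : IsLeast (spectrum ℝ
      (hP.posSemidef.sqrt * G * (hP.posSemidef.sqrt)⁻¹ +
        (hP.posSemidef.sqrt)⁻¹ * Gᵀ * hP.posSemidef.sqrt)) (2 * η₁))
    (hnd : (Fin n → ℝ) → ℝ) (hnd0 : hnd 0 = 0)
    (hndpos : ∀ x : Fin n → ℝ, x ≠ 0 → 0 < hnd x)
    (hnddef : ∀ x : Fin n → ℝ, x ≠ 0 → wnorm P (dil G (-(Real.log (hnd x))) *ᵥ x) = 1) :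
    ∀ x : Fin n → ℝ,
      (1 ≤ wnorm P x → hnd x ^ η₁ ≤ wnorm P x ∧ wnorm P x ≤ hnd x ^ η₂) ∧
      (wnorm P x ≤ 1 → hnd x ^ η₂ ≤ wnorm P x ∧ wnorm P x ≤ hnd x ^ η₁) := by
  have hQ := hP.posSemidef.isHermitian_sqrt
  have hQu := hP.posSemidef.isUnit_sqrt hP.isUnit
  have hQQ := hP.posSemidef.sqrt_mul_self
  have hη₁ : 0 < η₁ := by
    have := pos_of_mem_spectrum_conj_add_conj_transpose hQ hQu (by rwa [hQQ]) hmin.1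
    linarith
  have hη₂ : 0 < η₂ := by linarith [hmin.2 hmax.1]
  obtain ⟨hlo, hhi⟩ := smul_le_and_le_smul_of_spectrum hQ hQu hmin.2 hmax.2
  rw [hQQ] at hlo hhi
  intro x
  rcases eq_or_ne x 0 with rfl | hx
  · simp [wnorm, hnd0, Real.zero_rpow hη₁.ne', Real.zero_rpow hη₂.ne']
  set s := Real.log (hnd x)
  set y := dil G (-s) *ᵥ x
  have hy : y ≠ 0 := dil_mulVec_ne_zero G _ hx
  have hlog0 : Real.log (wnorm P (dil G 0 *ᵥ y)) = 0 := by
    rw [dil_zero, one_mulVec, hnddef x hx, Real.log_one]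
  have horbit : dil G s *ᵥ y = x := by simpa only [neg_neg] using dil_neg_mulVec_dil_mulVec G (-s) x
  have hlog := mem_Icc_mul_of_deriv_mem_Icc
    (fun t => (hasDerivAt_log_wnorm_dil hP G hy t).differentiableAt)
    (deriv_log_wnorm_dil_mem_Icc hP G hy hlo hhi) hlog0 s
  rw [horbit] at hlog
  exact rpow_bounds_of_log_mem_Icc (hndpos x hx) (wnorm_pos hP hx) hη₁ hlog
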